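/- Let n ≥ 3 be an integer and let l_1, …, l_n ∈ ℕ ∪ {∞} satisfy l_i ≥ 3 for every i, and suppose the curvature κ = 1 − n/2 + Σ_{i=1}^n 1/l_i (with 1/∞ = 0) is strictly negative. Then κ = −1/1806 if and only if n = 3 and the multiset {l_1, l_2, l_3} equals {3, 7, 43}. -/

import Mathlib

/-!
Every `1 / lᵢ` is at most `1 / 3`, so `κ ≤ 1 - n / 6` and a curvature of `-1/1806` forces
`n ≤ 6`. For each such `n` the reciprocals must sum to the fixed rational
`n / 2 - 1 - 1 / 1806`. If `k` reciprocals of values `≥ m` sum to `t` and `m` is attained,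
then `1 / t ≤ m ≤ k / t`; choosing the smallest degree first and recursing on the remaining
target therefore explores a finite tree, small enough for the kernel to evaluate. Its only
leaf is `(3, 7, 43)`.
-/

/-- The reciprocal of an extended natural number, as a real number,
with the convention `1/∞ = 0`. -/
noncomputable def einv : ℕ∞ → ℝ
  | ⊤ => 0
  | (m : ℕ) => (m : ℝ)⁻¹

theorem einv_coe (m : ℕ) : einv m = (m : ℝ)⁻¹ := rfl

theorem einv_ofNat (m : ℕ) [m.AtLeastTwo] :
    einv (no_index (OfNat.ofNat m)) = (OfNat.ofNat m : ℝ)⁻¹ :=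
  einv_coe m

theorem einv_top : einv ⊤ = 0 := rfl

theorem einv_nonneg (x : ℕ∞) : 0 ≤ einv x := by
  cases x with
  | top => exact le_rfl
  | coe m => exact inv_nonneg.2 m.cast_nonneg

theorem einv_pos {x : ℕ∞} (h0 : x ≠ 0) (htop : x ≠ ⊤) : 0 < einv x := by
  lift x to ℕ using htop
  rw [einv_coe]
  exact inv_pos.2 (Nat.cast_pos.2 (Nat.pos_of_ne_zero (by exact_mod_cast h0)))

theorem einv_le_inv_of_le {m : ℕ} (hm : 0 < m) {x : ℕ∞} (h : (m : ℕ∞) ≤ x) :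
    einv x ≤ (m : ℝ)⁻¹ := by
  cases x with
  | top => exact inv_nonneg.2 m.cast_nonneg
  | coe n =>
    rw [einv_coe]
    gcongr
    exact_mod_cast h

theorem eq_replicate_top_of_sum_einv_eq_zero {s : Multiset ℕ∞} (hs : ∀ x ∈ s, x ≠ 0)
    (hsum : (s.map einv).sum = 0) : s = Multiset.replicate s.card ⊤ := by
  refine Multiset.eq_replicate.2 ⟨rfl, fun x hx => ?_⟩
  by_contra htop
  have := Multiset.single_le_sum (fun y hy => ?_) _ (Multiset.mem_map_of_mem einv hx)
  · linarith [einv_pos (hs x hx) htop]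
  · obtain ⟨z, -, rfl⟩ := Multiset.mem_map.1 hy
    exact einv_nonneg z

-- Branches on the smallest element `m` of a solution with `k` elements in `[lo, ∞]` and
-- target `p / q`, which satisfies `q ≤ m * p ≤ k * q`; once the target is `0`, only `⊤` is left.
def einvSumSolutions : ℕ → ℕ → ℕ → ℕ → List (List ℕ∞)
  | 0, _, p, _ => if p = 0 then [[]] else []
  | k + 1, lo, p, q =>
    if p = 0 then [List.replicate (k + 1) ⊤]
    else (List.range' lo ((k + 1) * q / p + 1 - lo)).flatMap fun m =>
      if q ≤ m * p then (einvSumSolutions k m (m * p - q) (q * m)).map ((m : ℕ∞) :: ·) else []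

theorem exists_eq_cons_of_sum_einv_pos {s : Multiset ℕ∞} (hpos : 0 < (s.map einv).sum) :
    ∃ (m : ℕ) (t : Multiset ℕ∞), s = (m : ℕ∞) ::ₘ t ∧ ∀ x ∈ t, (m : ℕ∞) ≤ x := by
  have hs : s ≠ 0 := by rintro rfl; simp at hpos
  obtain ⟨y, hy, hmin⟩ := Multiset.exists_min_image id hs
  obtain ⟨t, rfl⟩ := Multiset.exists_cons_of_mem hy
  have htop : y ≠ ⊤ := by
    rintro rfl
    refine hpos.ne' (Multiset.sum_eq_zero fun z hz => ?_)
    obtain ⟨x, hx, rfl⟩ := Multiset.mem_map.1 hz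
    have hx' : ⊤ ≤ x := hmin x hx
    rw [top_le_iff.1 hx', einv_top]
  lift y to ℕ using htop
  exact ⟨y, t, rfl, fun x hx => hmin x (Multiset.mem_cons_of_mem hx)⟩

theorem sum_einv_le_card_mul_inv {m : ℕ} (hm : 0 < m) {t : Multiset ℕ∞}
    (ht : ∀ x ∈ t, (m : ℕ∞) ≤ x) :
    (t.map einv).sum ≤ t.card * (m : ℝ)⁻¹ := by
  simpa using Multiset.sum_le_card_nsmul (t.map einv) _ fun y hy => by
    obtain ⟨x, hx, rfl⟩ := Multiset.mem_map.1 hy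
    exact einv_le_inv_of_le hm (ht x hx)

theorem sum_einv_nonneg (t : Multiset ℕ∞) : 0 ≤ (t.map einv).sum :=
  Multiset.sum_nonneg fun y hy => by
    obtain ⟨x, -, rfl⟩ := Multiset.mem_map.1 hy
    exact einv_nonneg x

theorem bounds_of_sum_einv_cons_eq {m k p q : ℕ} (hm : 0 < m) (hq : 0 < q) {t : Multiset ℕ∞}
    (hcard : t.card = k) (ht : ∀ x ∈ t, (m : ℕ∞) ≤ x)
    (hsum : (((m : ℕ∞) ::ₘ t).map einv).sum = p / q) :
    q ≤ m * p ∧ m * p ≤ (k + 1) * q ∧ (t.map einv).sum = ((m * p - q : ℕ) : ℝ) / (q * m : ℕ) := by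
  rw [Multiset.map_cons, Multiset.sum_cons, einv_coe] at hsum
  have hm' : (0 : ℝ) < m := by exact_mod_cast hm
  have hq' : (0 : ℝ) < q := by exact_mod_cast hq
  have hupper := sum_einv_le_card_mul_inv hm ht
  have hlower := sum_einv_nonneg t
  rw [hcard] at hupper
  have hlow : q ≤ m * p := by
    have : (q : ℝ) ≤ m * p := by
      have := (div_le_div_iff₀ hm' hq').1 (show (1 : ℝ) / m ≤ p / q by rw [one_div]; linarith)
      linarith
    exact_mod_cast this
  refine ⟨hlow, ?_, ?_⟩
  · have : (m : ℝ) * p ≤ (k + 1) * q := by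
      have : (p : ℝ) / q ≤ (k + 1) / m := by
        rw [← hsum, add_div, div_eq_mul_inv (k : ℝ)]; linarith [one_div (m : ℝ)]
      rw [div_le_div_iff₀ hq' hm'] at this
      linarith
    exact_mod_cast this
  · rw [Nat.cast_sub hlow]
    push_cast
    rw [eq_sub_of_add_eq' hsum]
    field_simp

theorem exists_mem_einvSumSolutions (k : ℕ) {lo p q : ℕ} (hlo : 0 < lo) (hq : 0 < q)
    {s : Multiset ℕ∞} (hcard : s.card = k) (hs : ∀ x ∈ s, (lo : ℕ∞) ≤ x)
    (hsum : (s.map einv).sum = p / q) : ∃ l ∈ einvSumSolutions k lo p q, s = l := by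
  induction k generalizing lo p q s with
  | zero =>
    obtain rfl := Multiset.card_eq_zero.1 hcard
    have hp : p = 0 := by
      have : (p : ℝ) / q = 0 := by simpa using hsum.symm
      simpa [hq.ne'] using this
    exact ⟨[], by simp [einvSumSolutions, hp], rfl⟩
  | succ k ih =>
    have hs0 : ∀ x ∈ s, x ≠ 0 := fun x hx h0 =>
      (hs x hx).not_gt (h0 ▸ by exact_mod_cast hlo)
    rcases Nat.eq_zero_or_pos p with rfl | hp
    · refine ⟨List.replicate (k + 1) ⊤, by simp [einvSumSolutions], ?_⟩
      rw [Multiset.coe_replicate, ← hcard]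
      exact eq_replicate_top_of_sum_einv_eq_zero hs0 (by simpa using hsum)
    have hpos : 0 < (s.map einv).sum := by rw [hsum]; positivity
    obtain ⟨m, t, rfl, ht⟩ := exists_eq_cons_of_sum_einv_pos hpos
    have hlom : lo ≤ m := by exact_mod_cast hs m (Multiset.mem_cons_self _ _)
    have hm : 0 < m := hlo.trans_le hlom
    have htcard : t.card = k := by simpa using hcard
    obtain ⟨hlow, hhigh, htsum⟩ := bounds_of_sum_einv_cons_eq hm hq htcard ht hsum
    obtain ⟨l, hl, rfl⟩ := ih hm (Nat.mul_pos hq hm) htcard ht htsum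
    refine ⟨(m : ℕ∞) :: l, ?_, rfl⟩
    simp only [einvSumSolutions, hp.ne', if_false, List.mem_flatMap, List.mem_range'_1]
    refine ⟨m, ⟨hlom, ?_⟩, by simpa [hlow] using hl⟩
    have : m ≤ (k + 1) * q / p := (Nat.le_div_iff_mul_le hp).2 (by linarith)
    omega

-- `(903 n - 1807) / 1806 = n / 2 - 1 - 1 / 1806` is the sum forced by a curvature of `-1/1806`.
theorem einvSumSolutions_curvature {n : ℕ} (h3 : 3 ≤ n) (h6 : n ≤ 6) :
    einvSumSolutions n 3 (903 * n - 1807) 1806 = if n = 3 then [[3, 7, 43]] else [] := by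
  interval_cases n <;> decide

theorem stmt_1_general (n : ℕ) (hn : 3 ≤ n) (l : Fin n → ℕ∞) (hl : ∀ i, 3 ≤ l i) :
    (1 - (n : ℝ) / 2 + ∑ i, einv (l i) = -1 / 1806) ↔
      (n = 3 ∧ Finset.univ.val.map l = ({3, 7, 43} : Multiset ℕ∞)) := by
  set S := Finset.univ.val.map l
  have hS : ∑ i, einv (l i) = (S.map einv).sum := by rw [Multiset.map_map]; rfl
  have hcard : S.card = n := by simp [S]
  have hge : ∀ x ∈ S, ((3 : ℕ) : ℕ∞) ≤ x := by simpa [S] using hl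
  rw [hS]
  constructor
  · intro h
    have hsum : (S.map einv).sum = ((903 * n - 1807 : ℕ) : ℝ) / (1806 : ℕ) := by
      rw [Nat.cast_sub (by omega)]; push_cast; linarith
    have h6 : n < 7 := by
      have := sum_einv_le_card_mul_inv (by norm_num) hge
      rw [hcard] at this
      have : (n : ℝ) < 7 := by push_cast at this; linarith
      exact_mod_cast this
    obtain ⟨L, hL, hSL⟩ := exists_mem_einvSumSolutions n (by norm_num) (by norm_num) hcard hge hsum
    rw [einvSumSolutions_curvature hn (by omega)] at hL
    split_ifs at hL with h3
    · exact ⟨h3, by rw [hSL, List.mem_singleton.1 hL]; rfl⟩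
    · simp at hL
  · rintro ⟨rfl, hS3⟩
    rw [hS3]
    simp only [Multiset.insert_eq_cons, Multiset.map_cons, Multiset.sum_cons,
      Multiset.map_singleton, Multiset.sum_singleton, einv_ofNat]
    norm_num

/-- If `n ≥ 3`, `l₁, …, lₙ ∈ ℕ ∪ {∞}` all satisfy `lᵢ ≥ 3` and the curvature
`κ = 1 − n/2 + Σᵢ 1/lᵢ` (with `1/∞ = 0`) is strictly negative, then `κ = −1/1806`
if and only if `n = 3` and the multiset `{l₁, l₂, l₃}` equals `{3, 7, 43}`. -/
theorem stmt_1 (n : ℕ) (hn : 3 ≤ n) (l : Fin n → ℕ∞) (hl : ∀ i, 3 ≤ l i)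
    (hneg : 1 - (n : ℝ) / 2 + ∑ i, einv (l i) < 0) :
    (1 - (n : ℝ) / 2 + ∑ i, einv (l i) = -1 / 1806) ↔
      (n = 3 ∧ Finset.univ.val.map l = ({3, 7, 43} : Multiset ℕ∞)) :=
  stmt_1_general n hn l hl
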